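/- arXiv:2505.03657 — 5 statements merged into one kernel-verified Lean document; each statement's English description precedes it below -/
import Mathlib

section
/- Let (T0, T̃0) be a joint pair of abstract Friedrichs operators on a complex Hilbert space H and let M ∈ L(W;W') satisfy (M)-boundary conditions. Then the subspace V := ker(D − M) satisfies (V)-boundary conditions, and V^[⊥] = ker(D + M*). -/
open scoped InnerProductSpace
open Filter Topology LinearPMap

noncomputable section

variable {H : Type*} [NormedAddCommGroup H] [InnerProductSpace ℂ H] [CompleteSpace H]

/-- The inner product used in the paper (antilinear in the **second** entry):
`pInner x y = ⟪y, x⟫` in Mathlib's convention. -/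
def pInner {H : Type*} [NormedAddCommGroup H] [InnerProductSpace ℂ H] (x y : H) : ℂ :=
  ⟪y, x⟫_ℂ

/-- A pair of densely defined operators with common domain satisfying conditions (T1) and (T2). -/
structure IsDualPairT12 (T0 T0t : H →ₗ.[ℂ] H) (lam : ℝ) : Prop where
  dom_eq : T0.domain = T0t.domain
  dense' : Dense (T0.domain : Set H)
  sym : ∀ (φ : T0.domain) (ψ : T0t.domain), pInner (T0 φ) (ψ : H) = pInner (φ : H) (T0t ψ)
  lam_pos : 0 < lam
  bound : ∀ (x : H) (hx : x ∈ T0.domain),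
    ‖T0 ⟨x, hx⟩ + T0t ⟨x, dom_eq.le hx⟩‖ ≤ 2 * lam * ‖x‖

/-- A joint pair of abstract Friedrichs operators: (T1), (T2) and (T3). -/
structure IsFriedrichsPair (T0 T0t : H →ₗ.[ℂ] H) (lam mu : ℝ)
    extends IsDualPairT12 T0 T0t lam : Prop where
  mu_pos : 0 < mu
  coercive : ∀ (x : H) (hx : x ∈ T0.domain),
    2 * mu * ‖x‖ ^ 2 ≤ (pInner (T0 ⟨x, hx⟩ + T0t ⟨x, dom_eq.le hx⟩) x).re

/-- The boundary form `[u|v] := ⟨T₁u , v⟩ − ⟨u , T̃₁v⟩` on the graph space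
`W := dom T₁ = dom (T̃₀)*`.  The hypothesis `hW` expresses the fact `dom T₁ = dom T̃₁`. -/
def bform (T0 T0t : H →ₗ.[ℂ] H) (hW : T0t.adjoint.domain = T0.adjoint.domain)
    (u v : T0t.adjoint.domain) : ℂ :=
  pInner (T0t.adjoint u) (v : H) - pInner (u : H) (T0.adjoint ⟨(v : H), hW.le v.2⟩)

/-- `X^[⊥]`, the `[·|·]`-orthogonal complement of `X ⊆ W` in the graph space. -/
def iorth (T0 T0t : H →ₗ.[ℂ] H) (hW : T0t.adjoint.domain = T0.adjoint.domain)
    (X : Set ↥T0t.adjoint.domain) : Set ↥T0t.adjoint.domain :=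
  {u | ∀ v ∈ X, bform T0 T0t hW u v = 0}

/-- `W⁺ = {u ∈ W : [u|u] ≥ 0}`. -/
def Wplus (T0 T0t : H →ₗ.[ℂ] H) (hW : T0t.adjoint.domain = T0.adjoint.domain) :
    Set ↥T0t.adjoint.domain :=
  {u | 0 ≤ (bform T0 T0t hW u u).re}

/-- `W⁻ = {u ∈ W : [u|u] ≤ 0}`. -/
def Wminus (T0 T0t : H →ₗ.[ℂ] H) (hW : T0t.adjoint.domain = T0.adjoint.domain) :
    Set ↥T0t.adjoint.domain :=
  {u | (bform T0 T0t hW u u).re ≤ 0}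

/-- (V)-boundary conditions for a subset `V` of the graph space `W`. -/
def VBC (T0 T0t : H →ₗ.[ℂ] H) (hW : T0t.adjoint.domain = T0.adjoint.domain)
    (V : Set ↥T0t.adjoint.domain) : Prop :=
  V ⊆ Wplus T0 T0t hW ∧ iorth T0 T0t hW V ⊆ Wminus T0 T0t hW ∧
    V = iorth T0 T0t hW (iorth T0 T0t hW V)

/-- The graph norm `‖u‖_{T₁} = ‖u‖ + ‖T₁ u‖` on the graph space. -/
def gnorm (T0t : H →ₗ.[ℂ] H) (u : T0t.adjoint.domain) : ℝ :=
  ‖(u : H)‖ + ‖T0t.adjoint u‖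

/-- The distance associated with the graph norm. -/
def gdist (T0t : H →ₗ.[ℂ] H) (u v : T0t.adjoint.domain) : ℝ := gnorm T0t (u - v)

/-- Closedness (sequential) in the graph-norm topology of `W`. -/
def GClosed (T0t : H →ₗ.[ℂ] H) (X : Set ↥T0t.adjoint.domain) : Prop :=
  ∀ f : ℕ → ↥T0t.adjoint.domain, (∀ n, f n ∈ X) →
    ∀ l, Tendsto (fun n => gdist T0t (f n) l) atTop (𝓝 0) → l ∈ X

/-- `W₀` (the domain of the closure of `T₀`), viewed as a subset of the graph space `W`. -/
def W0set (T0 T0t : H →ₗ.[ℂ] H) : Set ↥T0t.adjoint.domain :=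
  {u | (u : H) ∈ T0.closure.domain}

/-- The graph inner product on `W` (in the paper's convention). -/
def gip (T0t : H →ₗ.[ℂ] H) (u v : ↥T0t.adjoint.domain) : ℂ :=
  pInner (u : H) (v : H) + pInner (T0t.adjoint u) (T0t.adjoint v)

/-- The (Hilbert) orthogonal complement of `W₀` in the graph space. -/
def W0perp (T0 T0t : H →ₗ.[ℂ] H) : Set ↥T0t.adjoint.domain :=
  {u | ∀ v : ↥T0t.adjoint.domain, (v : H) ∈ T0.closure.domain → gip T0t u v = 0}

/-- `ker T₁` as a subset of the graph space. -/
def kerT1set (T0t : H →ₗ.[ℂ] H) : Set ↥T0t.adjoint.domain := {u | T0t.adjoint u = 0}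

/-- `ker T̃₁` as a subset of the graph space. -/
def kerT1tset (T0 T0t : H →ₗ.[ℂ] H) (hW : T0t.adjoint.domain = T0.adjoint.domain) :
    Set ↥T0t.adjoint.domain :=
  {u | T0.adjoint ⟨(u : H), hW.le u.2⟩ = 0}

/-- An operator `M ∈ L(W;W')`, encoded through the pairing `m u v = ⟨Mu, v⟩_{W',W}`
(linear in `u`, antilinear in `v`, and bounded with respect to the graph norm). -/
structure MOp (T0t : H →ₗ.[ℂ] H) where
  m : ↥T0t.adjoint.domain → ↥T0t.adjoint.domain → ℂ
  add_left : ∀ u v w, m (u + v) w = m u w + m v w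
  smul_left : ∀ (c : ℂ) (u w), m (c • u) w = c * m u w
  add_right : ∀ u v w, m u (v + w) = m u v + m u w
  smul_right : ∀ (c : ℂ) (u w), m u (c • w) = starRingEnd ℂ c * m u w
  bounded : ∃ C, ∀ u v, ‖m u v‖ ≤ C * (gnorm T0t u * gnorm T0t v)

/-- The (M)-boundary conditions for a pairing `m u v = ⟨Mu, v⟩_{W',W}`:
(M1) non-negativity and (M2) `W = ker (D − M) + ker (D + M)`. -/
def MBC (T0 T0t : H →ₗ.[ℂ] H) (hW : T0t.adjoint.domain = T0.adjoint.domain)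
    (m : ↥T0t.adjoint.domain → ↥T0t.adjoint.domain → ℂ) : Prop :=
  (∀ u, 0 ≤ (m u u).re) ∧
  (∀ w : ↥T0t.adjoint.domain, ∃ a b : ↥T0t.adjoint.domain,
    (∀ v, bform T0 T0t hW a v = m a v) ∧ (∀ v, bform T0 T0t hW b v + m b v = 0) ∧ w = a + b)

/-- `ker (D − M)` for a pairing `m`. -/
def kerDsubM (T0 T0t : H →ₗ.[ℂ] H) (hW : T0t.adjoint.domain = T0.adjoint.domain)
    (m : ↥T0t.adjoint.domain → ↥T0t.adjoint.domain → ℂ) : Set ↥T0t.adjoint.domain :=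
  {u | ∀ v, bform T0 T0t hW u v = m u v}

/-- `ker (D + M)` for a pairing `m`. -/
def kerDaddM (T0 T0t : H →ₗ.[ℂ] H) (hW : T0t.adjoint.domain = T0.adjoint.domain)
    (m : ↥T0t.adjoint.domain → ↥T0t.adjoint.domain → ℂ) : Set ↥T0t.adjoint.domain :=
  {u | ∀ v, bform T0 T0t hW u v + m u v = 0}

/-!
The boundary form is Hermitian because `T₁ + T̃₁` is the bounded symmetric extension of
`T₀ + T̃₀`. With this and (M2), `ker D ⊆ V` (by a Cauchy–Schwarz argument for the
nonnegative `M`) and `V^[⊥] = ker (D + M*)` are algebraic, and the signs in (V) follow from (M1).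
The reflexivity `V^[⊥][⊥] ⊆ V` uses that `V` is closed in the graph norm: for `u ∉ V`,
projecting `(u, T₁ u)` onto the image of `V` in `H ⊕₂ H` gives `z` graph-orthogonal to `V` but
not to `u`. As `dom T₀ ⊆ ker D ⊆ V`, the vector `w := T₁ z` satisfies `T̃₁ w = -z`, hence
`[x|w] = ⟨x, z⟩_{T₁}` for all `x`; so `w ∈ V^[⊥]` and `[u|w] ≠ 0`.
-/

section BoundaryConditions

theorem ContinuousLinearMap.isSymmetric_of_dense {𝕜 E : Type*} [RCLike 𝕜] [NormedAddCommGroup E]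
    [InnerProductSpace 𝕜 E] {s : Set E} (hs : Dense s) (A : E →L[𝕜] E)
    (h : ∀ x ∈ s, ∀ y ∈ s, ⟪A x, y⟫_𝕜 = ⟪x, A y⟫_𝕜) : (A : E →ₗ[𝕜] E).IsSymmetric := by
  have hA : (fun p : E × E => ⟪A p.1, p.2⟫_𝕜) = fun p => ⟪p.1, A p.2⟫_𝕜 :=
    Continuous.ext_on (hs.prod hs) (by fun_prop) (by fun_prop) fun p hp => h _ hp.1 _ hp.2
  exact fun x y => congrFun hA (x, y)

namespace IsDualPairT12

section

variable {E : Type*} [NormedAddCommGroup E] [InnerProductSpace ℂ E] {T0 T0t : E →ₗ.[ℂ] E}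
  {lam : ℝ}

theorem dense_domain_right (hF : IsDualPairT12 T0 T0t lam) : Dense (T0t.domain : Set E) :=
  hF.dom_eq ▸ hF.dense'

theorem isFormalAdjoint (hF : IsDualPairT12 T0 T0t lam) : T0.IsFormalAdjoint T0t := by
  intro φ ψ
  rw [← inner_conj_symm, ← pInner, hF.sym, pInner, inner_conj_symm]

theorem inner_sum_symm (hF : IsDualPairT12 T0 T0t lam) (φ ψ : T0.domain) :
    ⟪T0 φ + T0t (Submodule.inclusion hF.dom_eq.le φ), (ψ : E)⟫_ℂ =
      ⟪(φ : E), T0 ψ + T0t (Submodule.inclusion hF.dom_eq.le ψ)⟫_ℂ := by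
  have h1 : ⟪T0 φ, (ψ : E)⟫_ℂ = ⟪(φ : E), T0t (Submodule.inclusion hF.dom_eq.le ψ)⟫_ℂ :=
    hF.isFormalAdjoint φ (Submodule.inclusion hF.dom_eq.le ψ)
  have h2 : ⟪T0t (Submodule.inclusion hF.dom_eq.le φ), (ψ : E)⟫_ℂ = ⟪(φ : E), T0 ψ⟫_ℂ :=
    hF.isFormalAdjoint.symm (Submodule.inclusion hF.dom_eq.le φ) ψ
  rw [inner_add_left, inner_add_right, h1, h2, add_comm]

end

variable {T0 T0t : H →ₗ.[ℂ] H} {lam : ℝ}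

theorem le_adjoint_right (hF : IsDualPairT12 T0 T0t lam) : T0 ≤ T0t.adjoint :=
  hF.isFormalAdjoint.symm.le_adjoint hF.dense_domain_right

def sumOnDomain (hF : IsDualPairT12 T0 T0t lam) : T0.domain →L[ℂ] H :=
  LinearMap.mkContinuous (T0.toFun + T0t.toFun ∘ₗ Submodule.inclusion hF.dom_eq.le) (2 * lam)
    fun φ => hF.bound φ φ.2

def sumExt (hF : IsDualPairT12 T0 T0t lam) : H →L[ℂ] H :=
  hF.sumOnDomain.extend T0.domain.subtypeL

theorem sumExt_apply (hF : IsDualPairT12 T0 T0t lam) (φ : T0.domain) :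
    hF.sumExt φ = T0 φ + T0t (Submodule.inclusion hF.dom_eq.le φ) :=
  ContinuousLinearMap.extend_eq _ hF.dense'.denseRange_val
    isUniformEmbedding_subtype_val.isUniformInducing φ

theorem isSymmetric_sumExt (hF : IsDualPairT12 T0 T0t lam) :
    (hF.sumExt : H →ₗ[ℂ] H).IsSymmetric :=
  hF.sumExt.isSymmetric_of_dense hF.dense' fun φ hφ ψ hψ => by
    have h := hF.inner_sum_symm ⟨φ, hφ⟩ ⟨ψ, hψ⟩
    rwa [← sumExt_apply, ← sumExt_apply] at h

theorem adjoint_add_adjoint_eq_sumExt (hF : IsDualPairT12 T0 T0t lam)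
    (hW : T0t.adjoint.domain = T0.adjoint.domain) (u : T0t.adjoint.domain) :
    T0t.adjoint u + T0.adjoint ⟨u, hW.le u.2⟩ = hF.sumExt u := by
  refine hF.dense'.eq_of_inner_left ℂ fun φ hφ => ?_
  have h1 : ⟪T0t.adjoint u, φ⟫_ℂ = ⟪(u : H), T0t (Submodule.inclusion hF.dom_eq.le ⟨φ, hφ⟩)⟫_ℂ :=
    T0t.adjoint_isFormalAdjoint hF.dense_domain_right u (Submodule.inclusion hF.dom_eq.le ⟨φ, hφ⟩)
  have h2 : ⟪T0.adjoint ⟨u, hW.le u.2⟩, φ⟫_ℂ = ⟪(u : H), T0 ⟨φ, hφ⟩⟫_ℂ :=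
    T0.adjoint_isFormalAdjoint hF.dense' ⟨u, hW.le u.2⟩ ⟨φ, hφ⟩
  have h3 : ⟪hF.sumExt u, φ⟫_ℂ = ⟪(u : H), hF.sumExt φ⟫_ℂ := hF.isSymmetric_sumExt u φ
  rw [inner_add_left, h1, h2, h3, hF.sumExt_apply ⟨φ, hφ⟩, inner_add_right, add_comm]

end IsDualPairT12

variable {T0 T0t : H →ₗ.[ℂ] H} {lam : ℝ} (hW : T0t.adjoint.domain = T0.adjoint.domain)

theorem bform_conj_symm (hF : IsDualPairT12 T0 T0t lam) (u v : T0t.adjoint.domain) :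
    starRingEnd ℂ (bform T0 T0t hW v u) = bform T0 T0t hW u v := by
  have h := hF.isSymmetric_sumExt v u
  simp only [ContinuousLinearMap.coe_coe, ← hF.adjoint_add_adjoint_eq_sumExt hW, inner_add_left,
    inner_add_right] at h
  simp only [bform, pInner, _root_.map_sub, inner_conj_symm]
  linear_combination h

theorem bform_add_left (u u' v : T0t.adjoint.domain) :
    bform T0 T0t hW (u + u') v = bform T0 T0t hW u v + bform T0 T0t hW u' v := by
  simp only [bform, pInner, LinearPMap.map_add, Submodule.coe_add, inner_add_right]
  ring

theorem bform_smul_left (c : ℂ) (u v : T0t.adjoint.domain) :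
    bform T0 T0t hW (c • u) v = c * bform T0 T0t hW u v := by
  simp only [bform, pInner, LinearPMap.map_smul, Submodule.coe_smul, inner_smul_right]
  ring

theorem bform_sub_left (u u' v : T0t.adjoint.domain) :
    bform T0 T0t hW (u - u') v = bform T0 T0t hW u v - bform T0 T0t hW u' v := by
  simp only [bform, pInner, LinearPMap.map_sub, Submodule.coe_sub, inner_sub_right]
  ring

theorem bform_add_right (hF : IsDualPairT12 T0 T0t lam) (u v v' : T0t.adjoint.domain) :
    bform T0 T0t hW u (v + v') = bform T0 T0t hW u v + bform T0 T0t hW u v' := by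
  rw [← bform_conj_symm hW hF, bform_add_left, _root_.map_add, bform_conj_symm hW hF,
    bform_conj_symm hW hF]

theorem norm_bform_le (u v : T0t.adjoint.domain) :
    ‖bform T0 T0t hW u v‖ ≤ (‖(v : H)‖ + ‖T0.adjoint ⟨v, hW.le v.2⟩‖) * gnorm T0t u := by
  have hu : ‖(u : H)‖ ≤ gnorm T0t u := le_add_of_nonneg_right (norm_nonneg _)
  have hTu : ‖T0t.adjoint u‖ ≤ gnorm T0t u := le_add_of_nonneg_left (norm_nonneg _)
  calc ‖bform T0 T0t hW u v‖
      ≤ ‖(v : H)‖ * ‖T0t.adjoint u‖ + ‖T0.adjoint ⟨v, hW.le v.2⟩‖ * ‖(u : H)‖ :=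
        (norm_sub_le _ _).trans (add_le_add (norm_inner_le_norm _ _) (norm_inner_le_norm _ _))
    _ ≤ _ := by rw [add_mul]; gcongr

theorem subset_iorth_iorth (hF : IsDualPairT12 T0 T0t lam) (X : Set T0t.adjoint.domain) :
    X ⊆ iorth T0 T0t hW (iorth T0 T0t hW X) := fun v hv y hy => by
  rw [← bform_conj_symm hW hF, hy v hv, _root_.map_zero]

theorem adjoint_apply_of_mem_domain (hF : IsDualPairT12 T0 T0t lam) (x : T0t.adjoint.domain)
    (hx : (x : H) ∈ T0.domain) : T0t.adjoint x = T0 ⟨x, hx⟩ :=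
  (hF.le_adjoint_right.2 rfl).symm

theorem mem_iorth_univ_of_mem_domain (hF : IsDualPairT12 T0 T0t lam) (x : T0t.adjoint.domain)
    (hx : (x : H) ∈ T0.domain) : x ∈ iorth T0 T0t hW Set.univ := fun v _ => by
  have h : ⟪T0.adjoint ⟨v, hW.le v.2⟩, x⟫_ℂ = ⟪(v : H), T0 ⟨x, hx⟩⟫_ℂ :=
    T0.adjoint_isFormalAdjoint hF.dense' ⟨v, hW.le v.2⟩ ⟨x, hx⟩
  rw [bform, pInner, pInner, adjoint_apply_of_mem_domain hF x hx, h, sub_self]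

/-- The representing vector is `T₁ z`: orthogonality to `dom T₀` says exactly that
`T̃₁ (T₁ z) = -z`. -/
theorem exists_bform_eq_gip (hF : IsDualPairT12 T0 T0t lam) {z : T0t.adjoint.domain}
    (hz : ∀ x : T0t.adjoint.domain, (x : H) ∈ T0.domain → gip T0t x z = 0) :
    ∃ w, ∀ x, bform T0 T0t hW x w = gip T0t x z := by
  have key : ∀ φ : T0.domain, ⟪-(z : H), φ⟫_ℂ = ⟪T0t.adjoint z, T0 φ⟫_ℂ := fun φ => by
    have h := hz ⟨φ, hF.le_adjoint_right.1 φ.2⟩ φ.2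
    rw [gip, pInner, pInner, adjoint_apply_of_mem_domain hF ⟨φ, _⟩ φ.2] at h
    rw [inner_neg_left]
    linear_combination -h
  have hmem : T0t.adjoint z ∈ T0.adjoint.domain :=
    LinearPMap.mem_adjoint_domain_of_exists _ ⟨_, key⟩
  have hval : T0.adjoint ⟨_, hmem⟩ = -(z : H) := LinearPMap.adjoint_apply_eq hF.dense' _ key
  refine ⟨⟨_, hW ▸ hmem⟩, fun x => ?_⟩
  rw [bform, pInner, pInner, gip, pInner, pInner, hval, inner_neg_left]
  ring

def graphEmbedding (T : H →ₗ.[ℂ] H) : T.domain →ₗ[ℂ] WithLp 2 (H × H) :=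
  (WithLp.linearEquiv 2 ℂ (H × H)).symm.toLinearMap ∘ₗ T.domain.subtype.prod T.toFun

theorem gip_eq_inner_graphEmbedding (u v : T0t.adjoint.domain) :
    gip T0t u v = ⟪graphEmbedding T0t.adjoint v, graphEmbedding T0t.adjoint u⟫_ℂ :=
  rfl

theorem isClosed_map_graphEmbedding (hd : Dense (T0t.domain : Set H))
    {V : Submodule ℂ T0t.adjoint.domain} (hV : GClosed T0t V) :
    IsClosed (V.map (graphEmbedding T0t.adjoint) : Set (WithLp 2 (H × H))) := by
  refine IsSeqClosed.isClosed fun p q hp hpq => ?_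
  choose v hv hpv using hp
  have hlim : Tendsto (fun n => ((v n : H), T0t.adjoint (v n))) atTop (𝓝 (WithLp.ofLp q)) := by
    have h := ((WithLp.prod_continuous_ofLp 2 H H).tendsto q).comp hpq
    rwa [show WithLp.ofLp ∘ p = fun n => ((v n : H), T0t.adjoint (v n)) from
      funext fun n => by rw [Function.comp_apply, ← hpv n]; rfl] at h
  obtain ⟨y, hy1, hy2⟩ := (T0t.adjoint.mem_graph_iff).1 <|
    (T0t.adjoint_isClosed hd).mem_of_tendsto hlim
      (Eventually.of_forall fun n => T0t.adjoint.mem_graph (v n))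
  have hdist : Tendsto (fun n => gdist T0t (v n) y) atTop (𝓝 0) := by
    have h1 := tendsto_iff_norm_sub_tendsto_zero.1 (hy1 ▸ hlim.fst_nhds)
    have h2 := tendsto_iff_norm_sub_tendsto_zero.1 (hy2 ▸ hlim.snd_nhds)
    simpa only [gdist, gnorm, Submodule.coe_sub, LinearPMap.map_sub, add_zero] using h1.add h2
  exact ⟨y, hV v hv y hdist, WithLp.ofLp_injective 2 (Prod.ext hy1 hy2)⟩

theorem exists_gip_eq_zero_ne_zero (hd : Dense (T0t.domain : Set H))
    {V : Submodule ℂ T0t.adjoint.domain} (hV : GClosed T0t V) {u : T0t.adjoint.domain}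
    (hu : u ∉ V) : ∃ z, (∀ x ∈ V, gip T0t x z = 0) ∧ gip T0t u z ≠ 0 := by
  set ι := graphEmbedding T0t.adjoint
  set K := V.map ι
  have : CompleteSpace K := (isClosed_map_graphEmbedding hd hV).completeSpace_coe
  obtain ⟨v, hv, hpv⟩ := K.starProjection_apply_mem (ι u)
  have hz : ι (u - v) ∈ Kᗮ := by
    rw [_root_.map_sub, hpv]
    exact K.sub_starProjection_mem_orthogonal _
  refine ⟨u - v, fun x hx => K.inner_left_of_mem_orthogonal (V.mem_map_of_mem hx) hz, ?_⟩
  have hne : ι (u - v) ≠ 0 := fun h0 => hu <| by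
    have : u - v = 0 := Subtype.ext (congrArg (fun p : WithLp 2 (H × H) => p.fst) h0)
    rwa [sub_eq_zero.1 this]
  have hu_eq : ι u = ι (u - v) + ι v := by rw [_root_.map_sub, sub_add_cancel]
  rw [gip_eq_inner_graphEmbedding, hu_eq, inner_add_right,
    K.inner_left_of_mem_orthogonal (V.mem_map_of_mem hv) hz, add_zero]
  exact inner_self_ne_zero.2 hne

theorem iorth_iorth_subset (hF : IsDualPairT12 T0 T0t lam) {V : Submodule ℂ T0t.adjoint.domain}
    (hV : GClosed T0t V) (hV0 : iorth T0 T0t hW Set.univ ⊆ V) :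
    iorth T0 T0t hW (iorth T0 T0t hW V) ⊆ V := by
  intro u hu
  by_contra hu'
  obtain ⟨z, hzV, hzu⟩ := exists_gip_eq_zero_ne_zero hF.dense_domain_right hV hu'
  obtain ⟨w, hw⟩ := exists_bform_eq_gip hW hF fun x hx =>
    hzV x (hV0 (mem_iorth_univ_of_mem_domain hW hF x hx))
  have hwV : w ∈ iorth T0 T0t hW V := fun v hv => by
    rw [← bform_conj_symm hW hF, hw, hzV v hv, _root_.map_zero]
  exact hzu (hw u ▸ hu w hwV)

variable (M : MOp T0t)

namespace MOp

theorem map_sub_left (u v w : T0t.adjoint.domain) : M.m (u - v) w = M.m u w - M.m v w := by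
  rw [eq_sub_iff_add_eq, ← M.add_left, sub_add_cancel]

/-- A nonnegative quadratic `t ↦ Re ⟨M(u + t v), u + t v⟩` vanishing at `t = 0` has no
linear term. -/
theorem add_conj_eq_zero_of_re_eq_zero (hM1 : ∀ u, 0 ≤ (M.m u u).re) {u : T0t.adjoint.domain}
    (hu : (M.m u u).re = 0) (v : T0t.adjoint.domain) : M.m u v + starRingEnd ℂ (M.m v u) = 0 := by
  have hre : ∀ v, (M.m u v + M.m v u).re = 0 := fun v => by
    have hq : ∀ t : ℝ, 0 ≤ (M.m v v).re * (t * t) + (M.m u v + M.m v u).re * t + 0 := fun t => by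
      have h := hM1 (u + (t : ℂ) • v)
      rw [M.add_left, M.add_right, M.add_right, M.smul_left, M.smul_left, M.smul_right,
        M.smul_right, Complex.conj_ofReal] at h
      simp only [Complex.add_re, Complex.re_ofReal_mul, hu] at h ⊢
      nlinarith
    have h := discrim_le_zero hq
    rw [discrim] at h
    nlinarith
  have h1 := hre v
  have h2 := hre (Complex.I • v)
  rw [M.smul_right, M.smul_left, Complex.conj_I] at h2
  apply Complex.ext
  · simpa using h1
  · simp only [Complex.add_re, Complex.mul_re, Complex.neg_re, Complex.I_re, Complex.neg_im,
      Complex.I_im] at h2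
    simp only [Complex.add_im, Complex.conj_im, Complex.zero_im]
    linarith

theorem eq_zero_of_mem_iorth_univ (hF : IsDualPairT12 T0 T0t lam) (hM : MBC T0 T0t hW M.m)
    {u : T0t.adjoint.domain} (hu : u ∈ iorth T0 T0t hW Set.univ) (v : T0t.adjoint.domain) :
    M.m u v = 0 := by
  have hu' : ∀ a, bform T0 T0t hW a u = 0 := fun a => by
    rw [← bform_conj_symm hW hF, hu a trivial, _root_.map_zero]
  have hleft : ∀ w, M.m w u = 0 := fun w => by
    obtain ⟨a, b, ha, hb, rfl⟩ := hM.2 w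
    rw [M.add_left, ← ha u, hu', ← neg_eq_of_add_eq_zero_right (hb u), hu', neg_zero, add_zero]
  have h := M.add_conj_eq_zero_of_re_eq_zero hM.1 (by rw [hleft u, Complex.zero_re]) v
  rwa [hleft v, _root_.map_zero, add_zero] at h

end MOp

def kerDsubMSubmodule : Submodule ℂ T0t.adjoint.domain where
  carrier := kerDsubM T0 T0t hW M.m
  add_mem' hu hv w := by rw [bform_add_left, M.add_left, hu w, hv w]
  zero_mem' w := by
    have h1 := bform_smul_left hW 0 0 w
    have h2 := M.smul_left 0 0 w
    rw [zero_smul, zero_mul] at h1 h2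
    rw [h1, h2]
  smul_mem' c u hu w := by rw [bform_smul_left, M.smul_left, hu w]

theorem iorth_univ_subset_kerDsubM (hF : IsDualPairT12 T0 T0t lam) (hM : MBC T0 T0t hW M.m) :
    iorth T0 T0t hW Set.univ ⊆ kerDsubM T0 T0t hW M.m := fun u hu v => by
  rw [hu v trivial, M.eq_zero_of_mem_iorth_univ hW hF hM hu v]

theorem gClosed_kerDsubM : GClosed T0t (kerDsubM T0 T0t hW M.m) := by
  intro f hf l hl v
  obtain ⟨C, hC⟩ := M.bounded
  set K := ‖(v : H)‖ + ‖T0.adjoint ⟨v, hW.le v.2⟩‖ + C * gnorm T0t v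
  have hle : ∀ n, ‖bform T0 T0t hW l v - M.m l v‖ ≤ K * gdist T0t (f n) l := fun n => by
    have e : bform T0 T0t hW l v - M.m l v =
        M.m (f n - l) v - bform T0 T0t hW (f n - l) v := by
      rw [bform_sub_left, M.map_sub_left, hf n v]
      ring
    have hM := hC (f n - l) v
    have hB := norm_bform_le hW (f n - l) v
    rw [e, gdist]
    calc _ ≤ ‖M.m (f n - l) v‖ + ‖bform T0 T0t hW (f n - l) v‖ := norm_sub_le _ _
      _ ≤ _ := by linarith
  have h0 := le_of_tendsto_of_tendsto' tendsto_const_nhds (by simpa using hl.const_mul K) hle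
  exact sub_eq_zero.1 (norm_le_zero_iff.1 h0)

theorem iorth_kerDsubM_eq (hF : IsDualPairT12 T0 T0t lam) (hM : MBC T0 T0t hW M.m) :
    iorth T0 T0t hW (kerDsubM T0 T0t hW M.m) =
      {u | ∀ v, bform T0 T0t hW u v + starRingEnd ℂ (M.m v u) = 0} := by
  ext u
  constructor
  · intro hu w
    obtain ⟨a, b, ha, hb, rfl⟩ := hM.2 w
    have hua : bform T0 T0t hW u a = 0 := hu a ha
    have hau : starRingEnd ℂ (M.m a u) = 0 := by rw [← ha u, bform_conj_symm hW hF, hua]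
    have hbu : starRingEnd ℂ (M.m b u) = -bform T0 T0t hW u b := by
      rw [← neg_eq_of_add_eq_zero_right (hb u), _root_.map_neg, bform_conj_symm hW hF]
    rw [bform_add_right hW hF, M.add_left, _root_.map_add, hua, hau, hbu]
    ring
  · intro hu v hv
    have h := hu v
    rw [← hv u, bform_conj_symm hW hF] at h
    simpa using h

theorem kerDsubM_subset_Wplus (hM1 : ∀ u, 0 ≤ (M.m u u).re) :
    kerDsubM T0 T0t hW M.m ⊆ Wplus T0 T0t hW := fun u hu => by
  simpa only [Wplus, Set.mem_ofPred_eq, hu u] using hM1 u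

theorem iorth_kerDsubM_subset_Wminus (hF : IsDualPairT12 T0 T0t lam) (hM : MBC T0 T0t hW M.m) :
    iorth T0 T0t hW (kerDsubM T0 T0t hW M.m) ⊆ Wminus T0 T0t hW := fun u hu => by
  rw [iorth_kerDsubM_eq hW M hF hM] at hu
  have h : (bform T0 T0t hW u u).re = -(M.m u u).re := by
    simpa using congrArg Complex.re (eq_neg_of_add_eq_zero_left (hu u))
  simpa only [Wminus, Set.mem_ofPred_eq, h, Left.neg_nonpos_iff] using hM.1 u

end BoundaryConditions

/-- Theorem 2.7(a): if `M` satisfies the (M)-boundary conditions, then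
`V := ker (D − M)` satisfies the (V)-boundary conditions and
`V^[⊥] = ker (D + M*)`. -/
theorem MBC_implies_VBC
    (T0 T0t : H →ₗ.[ℂ] H) (lam mu : ℝ) (hF : IsFriedrichsPair T0 T0t lam mu)
    (hW : T0t.adjoint.domain = T0.adjoint.domain)
    (M : MOp T0t) (hM : MBC T0 T0t hW M.m) :
    VBC T0 T0t hW (kerDsubM T0 T0t hW M.m) ∧
    iorth T0 T0t hW (kerDsubM T0 T0t hW M.m) =
      {u : ↥T0t.adjoint.domain | ∀ v, bform T0 T0t hW u v + starRingEnd ℂ (M.m v u) = 0} := by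
  have hF' := hF.toIsDualPairT12
  have hreflexive := iorth_iorth_subset hW hF' (V := kerDsubMSubmodule hW M)
    (gClosed_kerDsubM hW M) (iorth_univ_subset_kerDsubM hW M hF' hM)
  exact ⟨⟨kerDsubM_subset_Wplus hW M hM.1, iorth_kerDsubM_subset_Wminus hW M hF' hM,
    (subset_iorth_iorth hW hF' _).antisymm hreflexive⟩, iorth_kerDsubM_eq hW M hF' hM⟩
end
end

section
/- A pair (T0, T̃0) of densely defined linear operators with common domain D on a complex Hilbert space H is a joint pair of abstract Friedrichs operators if and only if there exist a densely defined skew-symmetric linear operator L0 with dom L0 = D (i.e. ⟨L0 φ, ψ⟩ = −⟨φ, L0 ψ⟩ for all φ, ψ ∈ D) and a bounded self-adjoint operator S on H with strictly positive bottom (i.e. ⟨S u, u⟩ ≥ c‖u‖² for some c > 0 and all u ∈ H) such that T0 = L0 + S and T̃0 = −L0 + S. In that case the decomposition is unique, S = ½ · (the closure of T0 + T̃0), and with the constants λ, μ from (T2), (T3) one has ‖S u‖ ≤ λ‖u‖ and ⟨S u, u⟩ ≥ μ‖u‖² for all u ∈ H. -/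
/-!
On `D` put `A = T₀ + T̃₀`. Condition (T2) says that `A / 2` is bounded, so it extends to a bounded
`S` on `H`; (T1) makes `A` symmetric and (T3) makes it coercive, and both properties pass from the
dense `D` to `S` by continuity. Then `L₀ = T₀ - S` is skew-symmetric because `T̃₀ - S = S - T₀`
on `D`. Conversely, any such splitting gives `T₀ + T̃₀ = 2 S` on `D`, which yields (T1)–(T3),
determines `S` by density (hence also `L₀ = T₀ - S`), and transfers the constants of (T2) and (T3)
to `S`.
-/

open scoped InnerProductSpace
open Filter Topology LinearPMap

noncomputable section

variable {H : Type*} [NormedAddCommGroup H] [InnerProductSpace ℂ H] [CompleteSpace H]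

section Density

theorem exists_continuousLinearMap_extension {𝕜 E F : Type*} [NontriviallyNormedField 𝕜]
    [NormedAddCommGroup E] [NormedSpace 𝕜 E] [NormedAddCommGroup F] [NormedSpace 𝕜 F]
    [CompleteSpace F] {D : Submodule 𝕜 E} (hD : Dense (D : Set E)) (g : D →ₗ[𝕜] F) {C : ℝ}
    (hg : ∀ x, ‖g x‖ ≤ C * ‖x‖) : ∃ S : E →L[𝕜] F, ∀ x : D, S x = g x :=
  ⟨(g.mkContinuous C hg).extend D.subtypeL, fun x =>
    ContinuousLinearMap.extend_eq _ hD.denseRange_val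
      isUniformEmbedding_subtype_val.isUniformInducing x⟩

theorem norm_apply_le_of_dense {𝕜 E F : Type*} [NormedField 𝕜] [SeminormedAddCommGroup E]
    [NormedSpace 𝕜 E] [SeminormedAddCommGroup F] [NormedSpace 𝕜 F] {D : Set E} (hD : Dense D)
    (S : E →L[𝕜] F) {C : ℝ} (h : ∀ x ∈ D, ‖S x‖ ≤ C * ‖x‖) (x : E) : ‖S x‖ ≤ C * ‖x‖ :=
  hD.induction h (isClosed_le S.continuous.norm (continuous_const.mul continuous_norm)) x

variable {E : Type*} [NormedAddCommGroup E] [InnerProductSpace ℂ E] {D : Set E}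

theorem pInner_symm_of_dense (hD : Dense D) (S : E →L[ℂ] E)
    (h : ∀ x ∈ D, ∀ y ∈ D, pInner (S x) y = pInner x (S y)) (x y : E) :
    pInner (S x) y = pInner x (S y) :=
  isClosed_property2 (p := fun x y => pInner (S x) y = pInner x (S y)) hD.denseRange_val
    (isClosed_eq (continuous_snd.inner (S.continuous.comp continuous_fst))
      ((S.continuous.comp continuous_snd).inner continuous_fst))
    (fun a b => h a a.2 b b.2) x y

theorem le_re_pInner_of_dense (hD : Dense D) (S : E →L[ℂ] E) {c : ℝ}
    (h : ∀ x ∈ D, c * ‖x‖ ^ 2 ≤ (pInner (S x) x).re) (x : E) :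
    c * ‖x‖ ^ 2 ≤ (pInner (S x) x).re :=
  hD.induction h (isClosed_le (continuous_const.mul (continuous_norm.pow 2))
    (Complex.continuous_re.comp (continuous_id.inner S.continuous))) x

end Density

section HalfSum

variable {E : Type*} [NormedAddCommGroup E] [InnerProductSpace ℂ E]
  {T0 T0t : E →ₗ.[ℂ] E} (hdom : T0.domain = T0t.domain) {S : E →L[ℂ] E}

theorem pInner_add_apply_symm
    (h1 : ∀ (φ : T0.domain) (ψ : T0t.domain), pInner (T0 φ) (ψ : E) = pInner (φ : E) (T0t ψ))
    (x y : E) (hx : x ∈ T0.domain) (hy : y ∈ T0.domain) :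
    pInner (T0 ⟨x, hx⟩ + T0t ⟨x, hdom.le hx⟩) y = pInner x (T0 ⟨y, hy⟩ + T0t ⟨y, hdom.le hy⟩) := by
  have hxy := h1 ⟨x, hx⟩ ⟨y, hdom.le hy⟩
  have hyx := congrArg (starRingEnd ℂ) (h1 ⟨y, hy⟩ ⟨x, hdom.le hx⟩)
  simp only [pInner, inner_conj_symm] at hxy hyx
  simp only [pInner, inner_add_left, inner_add_right]
  rw [hxy, hyx, add_comm]

theorem exists_eq_half_add [CompleteSpace E] (hD : Dense (T0.domain : Set E)) {lam : ℝ}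
    (hlam : ∀ (x : E) (hx : x ∈ T0.domain),
      ‖T0 ⟨x, hx⟩ + T0t ⟨x, hdom.le hx⟩‖ ≤ 2 * lam * ‖x‖) :
    ∃ S : E →L[ℂ] E, ∀ (x : E) (hx : x ∈ T0.domain),
      S x = (2 : ℂ)⁻¹ • (T0 ⟨x, hx⟩ + T0t ⟨x, hdom.le hx⟩) := by
  let g : T0.domain →ₗ[ℂ] E :=
    (2 : ℂ)⁻¹ • (T0.toFun + T0t.toFun ∘ₗ Submodule.inclusion hdom.le)
  have hg : ∀ x, ‖g x‖ ≤ lam * ‖x‖ := fun x => by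
    have := hlam x x.2
    change ‖(2 : ℂ)⁻¹ • (T0 ⟨x, x.2⟩ + T0t ⟨x, hdom.le x.2⟩)‖ ≤ lam * ‖(x : E)‖
    rw [norm_smul, norm_inv, Complex.norm_two]
    linarith
  obtain ⟨S, hS⟩ := exists_continuousLinearMap_extension hD g hg
  exact ⟨S, fun x hx => hS ⟨x, hx⟩⟩

theorem pInner_symm_of_eq_half_add (hD : Dense (T0.domain : Set E))
    (h1 : ∀ (φ : T0.domain) (ψ : T0t.domain), pInner (T0 φ) (ψ : E) = pInner (φ : E) (T0t ψ))
    (hS : ∀ (x : E) (hx : x ∈ T0.domain),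
      S x = (2 : ℂ)⁻¹ • (T0 ⟨x, hx⟩ + T0t ⟨x, hdom.le hx⟩)) (u v : E) :
    pInner (S u) v = pInner u (S v) :=
  pInner_symm_of_dense hD S (fun x hx y hy => by
    have := pInner_add_apply_symm hdom h1 x y hx hy
    simp only [pInner] at this
    simp only [hS x hx, hS y hy, pInner, inner_smul_left, inner_smul_right, map_inv₀,
      Complex.conj_ofNat, this]) u v

end HalfSum

section Decomposition

variable {E : Type*} [NormedAddCommGroup E] [InnerProductSpace ℂ E]

def IsDecomposition (T0 T0t : E →ₗ.[ℂ] E) (hdom : T0.domain = T0t.domain)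
    (L0 : E →ₗ.[ℂ] E) (S : E →L[ℂ] E) (hL : L0.domain = T0.domain) : Prop :=
  ∀ (x : E) (hx : x ∈ T0.domain),
    T0 ⟨x, hx⟩ = L0 ⟨x, hL.ge hx⟩ + S x ∧ T0t ⟨x, hdom.le hx⟩ = -L0 ⟨x, hL.ge hx⟩ + S x

variable {T0 T0t L0 L0' : E →ₗ.[ℂ] E} {S S' : E →L[ℂ] E}

theorem isDecomposition_sub_toPMap (hdom : T0.domain = T0t.domain)
    (hS : ∀ (x : E) (hx : x ∈ T0.domain),
      S x = (2 : ℂ)⁻¹ • (T0 ⟨x, hx⟩ + T0t ⟨x, hdom.le hx⟩)) :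
    IsDecomposition T0 T0t hdom (T0 - (S : E →ₗ[ℂ] E).toPMap T0.domain) S (inf_idem _) := by
  intro x hx
  have hsum : T0 ⟨x, hx⟩ + T0t ⟨x, hdom.le hx⟩ = S x + S x := by
    rw [hS x hx, ← two_smul ℂ, smul_smul, mul_inv_cancel₀ two_ne_zero, one_smul]
  refine ⟨(sub_add_cancel _ _).symm, ?_⟩
  change _ = -(T0 ⟨x, hx⟩ - S x) + S x
  rw [eq_sub_of_add_eq' hsum]
  abel

variable {hdom : T0.domain = T0t.domain} {hL : L0.domain = T0.domain}
  {hL' : L0'.domain = T0.domain}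

namespace IsDecomposition

theorem add_eq_two_smul (h : IsDecomposition T0 T0t hdom L0 S hL) (x : E) (hx : x ∈ T0.domain) :
    T0 ⟨x, hx⟩ + T0t ⟨x, hdom.le hx⟩ = (2 : ℂ) • S x := by
  rw [(h x hx).1, (h x hx).2, two_smul]
  abel

theorem apply_eq_half_add (h : IsDecomposition T0 T0t hdom L0 S hL) (x : E) (hx : x ∈ T0.domain) :
    S x = (2 : ℂ)⁻¹ • (T0 ⟨x, hx⟩ + T0t ⟨x, hdom.le hx⟩) := by
  rw [h.add_eq_two_smul, smul_smul, inv_mul_cancel₀ two_ne_zero, one_smul]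

theorem unique (h : IsDecomposition T0 T0t hdom L0 S hL) (hD : Dense (T0.domain : Set E))
    (h' : IsDecomposition T0 T0t hdom L0' S' hL') : L0 = L0' ∧ S = S' := by
  have hS : S = S' := ContinuousLinearMap.ext_on (s := T0.domain)
    (by rwa [Submodule.span_eq]) fun x hx => by
      rw [h.apply_eq_half_add x hx, h'.apply_eq_half_add x hx]
  refine ⟨LinearPMap.ext (hL.trans hL'.symm) fun x hx hx' => ?_, hS⟩
  have hx₀ : x ∈ T0.domain := hL ▸ hx
  rw [← add_right_cancel_iff (a := S x), ← (h x hx₀).1, (h' x hx₀).1, hS]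

theorem norm_apply_le (h : IsDecomposition T0 T0t hdom L0 S hL) (hD : Dense (T0.domain : Set E))
    {lam : ℝ}
    (hlam : ∀ (x : E) (hx : x ∈ T0.domain),
      ‖T0 ⟨x, hx⟩ + T0t ⟨x, hdom.le hx⟩‖ ≤ 2 * lam * ‖x‖) (u : E) :
    ‖S u‖ ≤ lam * ‖u‖ :=
  norm_apply_le_of_dense hD S (fun x hx => by
    have := hlam x hx
    rw [h.add_eq_two_smul, norm_smul, Complex.norm_two] at this
    linarith) u

theorem le_re_pInner (h : IsDecomposition T0 T0t hdom L0 S hL) (hD : Dense (T0.domain : Set E))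
    {mu : ℝ}
    (hmu : ∀ (x : E) (hx : x ∈ T0.domain),
      2 * mu * ‖x‖ ^ 2 ≤ (pInner (T0 ⟨x, hx⟩ + T0t ⟨x, hdom.le hx⟩) x).re) (u : E) :
    mu * ‖u‖ ^ 2 ≤ (pInner (S u) u).re :=
  le_re_pInner_of_dense hD S (fun x hx => by
    have := hmu x hx
    rw [h.add_eq_two_smul] at this
    simp only [pInner, inner_smul_right, Complex.mul_re, Complex.re_ofNat, Complex.im_ofNat,
      zero_mul, sub_zero] at this ⊢
    linarith) u

theorem pInner_apply_eq_pInner_apply (h : IsDecomposition T0 T0t hdom L0 S hL)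
    (hskew : ∀ (φ ψ : L0.domain), pInner (L0 φ) (ψ : E) = -pInner (φ : E) (L0 ψ))
    (hsym : ∀ u v : E, pInner (S u) v = pInner u (S v)) (φ : T0.domain) (ψ : T0t.domain) :
    pInner (T0 φ) (ψ : E) = pInner (φ : E) (T0t ψ) := by
  rw [show T0 φ = _ from (h φ φ.2).1, show T0t ψ = _ from (h ψ (hdom.ge ψ.2)).2]
  have := hskew ⟨φ, hL.ge φ.2⟩ ⟨ψ, hL.ge (hdom.ge ψ.2)⟩
  simp only [pInner, inner_add_left, inner_add_right, inner_neg_left] at this hsym ⊢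
  rw [this, hsym]

theorem pInner_apply_eq_neg_pInner_apply (h : IsDecomposition T0 T0t hdom L0 S hL)
    (h1 : ∀ (φ : T0.domain) (ψ : T0t.domain), pInner (T0 φ) (ψ : E) = pInner (φ : E) (T0t ψ))
    (hsym : ∀ u v : E, pInner (S u) v = pInner u (S v)) (φ ψ : L0.domain) :
    pInner (L0 φ) (ψ : E) = -pInner (φ : E) (L0 ψ) := by
  have hφ := (h φ (hL.le φ.2)).1
  have hψ := (h ψ (hL.le ψ.2)).2
  rw [eq_sub_of_add_eq hφ.symm, show L0 ψ = S ψ - T0t ⟨ψ, hdom.le (hL.le ψ.2)⟩ by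
    rw [hψ]; abel]
  have := h1 ⟨φ, hL.le φ.2⟩ ⟨ψ, hdom.le (hL.le ψ.2)⟩
  simp only [pInner, inner_sub_left, inner_sub_right] at this hsym ⊢
  rw [this, hsym]
  ring

theorem exists_norm_add_le (h : IsDecomposition T0 T0t hdom L0 S hL) :
    ∃ lam > (0 : ℝ), ∀ (x : E) (hx : x ∈ T0.domain),
      ‖T0 ⟨x, hx⟩ + T0t ⟨x, hdom.le hx⟩‖ ≤ 2 * lam * ‖x‖ := by
  refine ⟨‖S‖ + 1, by positivity, fun x hx => ?_⟩
  rw [h.add_eq_two_smul, norm_smul, Complex.norm_two]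
  nlinarith [S.le_opNorm x, norm_nonneg x]

theorem le_re_pInner_add (h : IsDecomposition T0 T0t hdom L0 S hL) {c : ℝ}
    (hc : ∀ u : E, c * ‖u‖ ^ 2 ≤ (pInner (S u) u).re) (x : E) (hx : x ∈ T0.domain) :
    2 * c * ‖x‖ ^ 2 ≤ (pInner (T0 ⟨x, hx⟩ + T0t ⟨x, hdom.le hx⟩) x).re := by
  have := hc x
  rw [h.add_eq_two_smul]
  simp only [pInner, inner_smul_right, Complex.mul_re, Complex.re_ofNat, Complex.im_ofNat,
    zero_mul, sub_zero] at this ⊢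
  linarith

end IsDecomposition

end Decomposition

/-- Theorem 2.8: `(T₀, T̃₀)` is a joint pair of abstract Friedrichs operators iff
`T₀ = L₀ + S` and `T̃₀ = −L₀ + S` for a skew-symmetric `L₀` (with domain `D`) and a
bounded self-adjoint `S` with strictly positive bottom; the decomposition is unique,
`S = ½ (closure of T₀ + T̃₀)` (i.e. `S` extends `½(T₀ + T̃₀)` continuously), and
`‖S u‖ ≤ λ‖u‖`, `⟨S u, u⟩ ≥ μ‖u‖²` with the constants from (T2), (T3). -/
theorem friedrichs_iff_skew_add_selfadjoint
    (T0 T0t : H →ₗ.[ℂ] H)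
    (hdom : T0.domain = T0t.domain) (hdense : Dense (T0.domain : Set H)) :
    (((∀ (φ : T0.domain) (ψ : T0t.domain),
          pInner (T0 φ) (ψ : H) = pInner (φ : H) (T0t ψ)) ∧
      (∃ lam > (0 : ℝ), ∀ (x : H) (hx : x ∈ T0.domain),
          ‖T0 ⟨x, hx⟩ + T0t ⟨x, hdom.le hx⟩‖ ≤ 2 * lam * ‖x‖) ∧
      (∃ mu > (0 : ℝ), ∀ (x : H) (hx : x ∈ T0.domain),
          2 * mu * ‖x‖ ^ 2 ≤ (pInner (T0 ⟨x, hx⟩ + T0t ⟨x, hdom.le hx⟩) x).re)) ↔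
     (∃ (L0 : H →ₗ.[ℂ] H) (S : H →L[ℂ] H) (hL : L0.domain = T0.domain),
        (∀ (φ ψ : L0.domain), pInner (L0 φ) (ψ : H) = -pInner (φ : H) (L0 ψ)) ∧
        (∀ u v : H, pInner (S u) v = pInner u (S v)) ∧
        (∃ c > (0 : ℝ), ∀ u : H, c * ‖u‖ ^ 2 ≤ (pInner (S u) u).re) ∧
        (∀ (x : H) (hx : x ∈ T0.domain),
          T0 ⟨x, hx⟩ = L0 ⟨x, hL.ge hx⟩ + S x ∧
          T0t ⟨x, hdom.le hx⟩ = -L0 ⟨x, hL.ge hx⟩ + S x))) ∧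
    (∀ (L0 L0' : H →ₗ.[ℂ] H) (S S' : H →L[ℂ] H)
        (hL : L0.domain = T0.domain) (hL' : L0'.domain = T0.domain),
      (∀ (φ ψ : L0.domain), pInner (L0 φ) (ψ : H) = -pInner (φ : H) (L0 ψ)) →
      (∀ u v : H, pInner (S u) v = pInner u (S v)) →
      (∃ c > (0 : ℝ), ∀ u : H, c * ‖u‖ ^ 2 ≤ (pInner (S u) u).re) →
      (∀ (x : H) (hx : x ∈ T0.domain),
        T0 ⟨x, hx⟩ = L0 ⟨x, hL.ge hx⟩ + S x ∧
        T0t ⟨x, hdom.le hx⟩ = -L0 ⟨x, hL.ge hx⟩ + S x) →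
      (∀ (φ ψ : L0'.domain), pInner (L0' φ) (ψ : H) = -pInner (φ : H) (L0' ψ)) →
      (∀ u v : H, pInner (S' u) v = pInner u (S' v)) →
      (∃ c > (0 : ℝ), ∀ u : H, c * ‖u‖ ^ 2 ≤ (pInner (S' u) u).re) →
      (∀ (x : H) (hx : x ∈ T0.domain),
        T0 ⟨x, hx⟩ = L0' ⟨x, hL'.ge hx⟩ + S' x ∧
        T0t ⟨x, hdom.le hx⟩ = -L0' ⟨x, hL'.ge hx⟩ + S' x) →
      L0 = L0' ∧ S = S') ∧
    (∀ (L0 : H →ₗ.[ℂ] H) (S : H →L[ℂ] H) (hL : L0.domain = T0.domain),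
      (∀ (φ ψ : L0.domain), pInner (L0 φ) (ψ : H) = -pInner (φ : H) (L0 ψ)) →
      (∀ u v : H, pInner (S u) v = pInner u (S v)) →
      (∃ c > (0 : ℝ), ∀ u : H, c * ‖u‖ ^ 2 ≤ (pInner (S u) u).re) →
      (∀ (x : H) (hx : x ∈ T0.domain),
        T0 ⟨x, hx⟩ = L0 ⟨x, hL.ge hx⟩ + S x ∧
        T0t ⟨x, hdom.le hx⟩ = -L0 ⟨x, hL.ge hx⟩ + S x) →
      (∀ (x : H) (hx : x ∈ T0.domain),
        S x = (2 : ℂ)⁻¹ • (T0 ⟨x, hx⟩ + T0t ⟨x, hdom.le hx⟩)) ∧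
      (∀ lam : ℝ, (∀ (x : H) (hx : x ∈ T0.domain),
          ‖T0 ⟨x, hx⟩ + T0t ⟨x, hdom.le hx⟩‖ ≤ 2 * lam * ‖x‖) →
        ∀ u : H, ‖S u‖ ≤ lam * ‖u‖) ∧
      (∀ mu : ℝ, (∀ (x : H) (hx : x ∈ T0.domain),
          2 * mu * ‖x‖ ^ 2 ≤ (pInner (T0 ⟨x, hx⟩ + T0t ⟨x, hdom.le hx⟩) x).re) →
        ∀ u : H, mu * ‖u‖ ^ 2 ≤ (pInner (S u) u).re)) := by
  refine ⟨⟨?_, ?_⟩, ?_, ?_⟩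
  · rintro ⟨h1, ⟨lam, -, hlam⟩, ⟨mu, hmu, hcoer⟩⟩
    obtain ⟨S, hS⟩ := exists_eq_half_add hdom hdense hlam
    have hdec := isDecomposition_sub_toPMap hdom hS
    have hsym := pInner_symm_of_eq_half_add hdom hdense h1 hS
    exact ⟨_, S, inf_idem _, hdec.pInner_apply_eq_neg_pInner_apply h1 hsym, hsym,
      ⟨mu, hmu, hdec.le_re_pInner hdense hcoer⟩, hdec⟩
  · rintro ⟨L0, S, hL, hskew, hsym, ⟨c, hc, hcoer⟩,
      (hdec : IsDecomposition T0 T0t hdom L0 S hL)⟩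
    exact ⟨hdec.pInner_apply_eq_pInner_apply hskew hsym, hdec.exists_norm_add_le,
      ⟨c, hc, hdec.le_re_pInner_add hcoer⟩⟩
  · intro L0 L0' S S' hL hL' _ _ _ (hdec : IsDecomposition T0 T0t hdom L0 S hL) _ _ _
      (hdec' : IsDecomposition T0 T0t hdom L0' S' hL')
    exact hdec.unique hdense hdec'
  · intro L0 S hL _ _ _ (hdec : IsDecomposition T0 T0t hdom L0 S hL)
    exact ⟨hdec.apply_eq_half_add, fun _ => hdec.norm_apply_le hdense,
      fun _ => hdec.le_re_pInner hdense⟩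
end
end

section
/- Let (T0, T̃0) be a pair of densely defined linear operators with common dense domain D on a complex Hilbert space H satisfying conditions (T1) and (T2). Then T0 ⊆ T̃0* and T̃0 ⊆ T0*; both T0 and T̃0 are closable, the domains of their closures coincide, and the domains of the adjoints coincide: dom T̃0* = dom T0*. -/
open scoped InnerProductSpace
open Filter Topology LinearPMap

noncomputable section

variable {H : Type*} [NormedAddCommGroup H] [InnerProductSpace ℂ H] [CompleteSpace H]

/-!
By (T1) each of `T₀`, `T̃₀` is a formal adjoint of the other, so each is contained in the adjoint
of the other, which is closed; hence both are closable. By (T2), `T₀ + T̃₀` extends to a bounded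
operator `A` on `H`, so `T̃₀ = A - T₀` on the common domain. The continuous map
`(x, y) ↦ (x, A x - y)` carries the graph of `T₀` into that of `T̃₀`, hence the closure of one
into the closure of the other, which gives `dom (closure T₀) ⊆ dom (closure T̃₀)`; and
`⟨y, T̃₀ x⟩ = ⟨A* y - T₀* y, x⟩` gives `dom T₀* ⊆ dom T̃₀*`. Exchanging the roles of the two
operators gives the reverse inclusions.
-/

namespace LinearPMap

section Closure

variable {R E F : Type*} [CommRing R] [AddCommGroup E] [AddCommGroup F] [Module R E] [Module R F]
  [TopologicalSpace R] [TopologicalSpace E] [TopologicalSpace F] [ContinuousAdd E]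
  [IsTopologicalAddGroup F] [ContinuousSMul R E] [ContinuousSMul R F]

theorem closure_domain_le_of_add_eq {T S : E →ₗ.[R] F} (hT : T.IsClosable) (hS : S.IsClosable)
    (hTS : T.domain ≤ S.domain) (A : E →L[R] F)
    (hA : ∀ x : T.domain, A x = T x + S (Submodule.inclusion hTS x)) :
    T.closure.domain ≤ S.closure.domain := by
  set Φ : E × F → E × F := fun p => (p.1, A p.1 - p.2)
  have hΦ : Continuous Φ := by fun_prop
  have hmaps : ∀ p ∈ (T.graph : Set (E × F)), Φ p ∈ (S.graph : Set (E × F)) := by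
    intro p hp
    obtain ⟨x, hx, hTx⟩ := T.mem_graph_iff.mp hp
    refine S.mem_graph_iff.mpr ⟨Submodule.inclusion hTS x, hx, ?_⟩
    simp [Φ, ← hx, ← hTx, hA x]
  intro x hx
  obtain ⟨y, hxy⟩ := mem_domain_iff.mp hx
  rw [← hT.graph_closure_eq_closure_graph, ← SetLike.mem_coe,
    Submodule.topologicalClosure_coe] at hxy
  have hΦxy := map_mem_closure hΦ hxy hmaps
  rw [← Submodule.topologicalClosure_coe, SetLike.mem_coe,
    hS.graph_closure_eq_closure_graph] at hΦxy
  exact mem_domain_of_mem_graph hΦxy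

end Closure

section Adjoint

variable {𝕜 E F : Type*} [RCLike 𝕜] [NormedAddCommGroup E] [InnerProductSpace 𝕜 E]
  [NormedAddCommGroup F] [InnerProductSpace 𝕜 F]

theorem exists_continuousLinearMap_eq_add [CompleteSpace F] {T S : E →ₗ.[𝕜] F}
    (hTS : T.domain ≤ S.domain) (hT : Dense (T.domain : Set E)) (C : ℝ)
    (hC : ∀ x : T.domain, ‖T x + S (Submodule.inclusion hTS x)‖ ≤ C * ‖(x : E)‖) :
    ∃ A : E →L[𝕜] F, ∀ x : T.domain, A x = T x + S (Submodule.inclusion hTS x) := by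
  set f : T.domain →ₗ[𝕜] F := T.toFun + S.toFun ∘ₗ Submodule.inclusion hTS
  have hdense : DenseRange T.domain.subtype := by simpa using hT.denseRange_val
  exact ⟨f.extendOfNorm T.domain.subtype, LinearMap.extendOfNorm_eq hdense ⟨C, hC⟩⟩

theorem isClosable_of_isFormalAdjoint [CompleteSpace F] {T : E →ₗ.[𝕜] F} {S : F →ₗ.[𝕜] E}
    (hS : Dense (S.domain : Set F)) (h : S.IsFormalAdjoint T) : T.IsClosable :=
  ((adjoint_isClosed hS).isClosable).leIsClosable (h.le_adjoint hS)

theorem adjoint_domain_le_of_add_eq [CompleteSpace E] [CompleteSpace F] {T S : E →ₗ.[𝕜] F}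
    (hT : Dense (T.domain : Set E)) (hST : S.domain ≤ T.domain) (A : E →L[𝕜] F)
    (hA : ∀ x : S.domain, A x = S x + T (Submodule.inclusion hST x)) :
    T†.domain ≤ S†.domain := by
  intro y hy
  refine mem_adjoint_domain_of_exists y ⟨A.adjoint y - T† ⟨y, hy⟩, fun x => ?_⟩
  have hT_adj : ⟪T† ⟨y, hy⟩, (x : E)⟫_𝕜 = ⟪y, T (Submodule.inclusion hST x)⟫_𝕜 :=
    adjoint_isFormalAdjoint hT ⟨y, hy⟩ (Submodule.inclusion hST x)
  rw [inner_sub_left, ContinuousLinearMap.adjoint_inner_left, hA x, inner_add_right, hT_adj,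
    add_sub_cancel_right]

end Adjoint

end LinearPMap

/-- Theorem 2.3 (i)–(iii): under (T1)–(T2), `T₀ ⊆ T̃₀* =: T₁` and `T̃₀ ⊆ T₀* =: T̃₁`,
both operators are closable, the domains of the closures coincide, and
`dom T₁ = dom T̃₁`. -/
theorem dualPair_adjoint_extensions
    (T0 T0t : H →ₗ.[ℂ] H) (lam : ℝ) (hP : IsDualPairT12 T0 T0t lam) :
    T0 ≤ T0t.adjoint ∧ T0t ≤ T0.adjoint ∧
    T0.IsClosable ∧ T0t.IsClosable ∧
    T0.closure.domain = T0t.closure.domain ∧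
    T0t.adjoint.domain = T0.adjoint.domain := by
  obtain ⟨hd, hdense, hsym, -, hb⟩ := hP
  have hdense' : Dense (T0t.domain : Set H) := hd ▸ hdense
  have hfa : T0t.IsFormalAdjoint T0 := fun ψ φ => (hsym φ ψ).symm
  obtain ⟨A, hA⟩ := exists_continuousLinearMap_eq_add hd.le hdense (2 * lam) fun x => hb x x.2
  have hA' : ∀ x : T0t.domain, A x = T0t x + T0 (Submodule.inclusion hd.ge x) := fun x => by
    rw [add_comm]; exact hA (Submodule.inclusion hd.ge x)
  have hc0 : T0.IsClosable := isClosable_of_isFormalAdjoint hdense' hfa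
  have hc1 : T0t.IsClosable := isClosable_of_isFormalAdjoint hdense hfa.symm
  exact ⟨hfa.le_adjoint hdense', hfa.symm.le_adjoint hdense, hc0, hc1,
    (closure_domain_le_of_add_eq hc0 hc1 hd.le A hA).antisymm
      (closure_domain_le_of_add_eq hc1 hc0 hd.ge A hA'),
    (adjoint_domain_le_of_add_eq hdense' hd.le A hA).antisymm
      (adjoint_domain_le_of_add_eq hdense hd.ge A hA')⟩
end
end

section
/- Let (T0, T̃0) be a pair of densely defined linear operators with common dense domain D on a complex Hilbert space H satisfying conditions (T1) and (T2), and set T1 := T̃0*, T̃1 := T0*, W := dom T1 = dom T̃1. Then the graph norms ‖u‖ + ‖T1 u‖ and ‖u‖ + ‖T̃1 u‖ are equivalent on W (in particular ‖u‖ + ‖T̃1 u‖ ≤ (1 + 2λ)(‖u‖ + ‖T1 u‖) for all u ∈ W), W equipped with the graph norm ‖u‖ + ‖T1 u‖ is complete, and W0 := dom(closure of T0) is a closed subspace of W (with respect to the graph norm) containing D. -/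
open scoped InnerProductSpace
open Filter Topology LinearPMap

noncomputable section

variable {H : Type*} [NormedAddCommGroup H] [InnerProductSpace ℂ H] [CompleteSpace H]

/-!
The sum `T₁ + T̃₁` is bounded by `2λ` on `W`: testing `T₁u + T̃₁u` against `φ ∈ D` moves it
onto `(T₀ + T̃₀)φ`, which is bounded by (T2), and `D` is dense. Hence `‖T̃₁u‖ ≤ 2λ‖u‖ + ‖T₁u‖`,
which gives the equivalence of the two graph norms. Completeness of `W` and closedness of `W₀`
in it both come from closed graphs: `T₁ = T̃₀*` is closed as an adjoint, and `closure T₀ ≤ T₁`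
is closed as a closure.
-/

theorem norm_add_norm_le_of_norm_add_le {E F : Type*} [SeminormedAddCommGroup E]
    [SeminormedAddCommGroup F] {x : E} {a b : F} {c : ℝ} (hc : 0 ≤ c)
    (h : ‖a + b‖ ≤ c * ‖x‖) : ‖x‖ + ‖b‖ ≤ (1 + c) * (‖x‖ + ‖a‖) := by
  have hb : ‖b‖ ≤ ‖a + b‖ + ‖a‖ := by simpa using norm_sub_le (a + b) a
  nlinarith [mul_nonneg hc (norm_nonneg a)]

theorem Dense.norm_le_of_forall_norm_inner_le {𝕜 E : Type*} [RCLike 𝕜] [NormedAddCommGroup E]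
    [InnerProductSpace 𝕜 E] {s : Set E} (hs : Dense s) {y : E} {C : ℝ} (hC : 0 ≤ C)
    (h : ∀ φ ∈ s, ‖⟪y, φ⟫_𝕜‖ ≤ C * ‖φ‖) : ‖y‖ ≤ C := by
  have hclosed : IsClosed {φ : E | ‖⟪y, φ⟫_𝕜‖ ≤ C * ‖φ‖} :=
    isClosed_le (continuous_const.inner continuous_id).norm (continuous_const.mul continuous_norm)
  have hy : ‖⟪y, y⟫_𝕜‖ ≤ C * ‖y‖ :=
    hclosed.closure_subset_iff.2 h (hs.closure_eq ▸ Set.mem_univ y)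
  rw [← inner_self_re_eq_norm, inner_self_eq_norm_mul_norm] at hy
  nlinarith [norm_nonneg y]

namespace LinearPMap

variable {𝕜 E F : Type*} [NormedField 𝕜] [NormedAddCommGroup E] [NormedSpace 𝕜 E]
  [NormedAddCommGroup F] [NormedSpace 𝕜 F]

theorem closure_le_of_le_of_isClosed {S T : E →ₗ.[𝕜] F} (hT : T.IsClosed) (h : S ≤ T) :
    S.closure ≤ T := by
  have hS : S.IsClosable := isClosable_iff_exists_closed_extension.2 ⟨T, hT, h⟩
  refine le_of_le_graph ?_
  rw [← hS.graph_closure_eq_closure_graph]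
  exact Submodule.topologicalClosure_minimal _ (le_graph_of_le h) hT

theorem IsClosed.exists_tendsto_of_cauchySeq [CompleteSpace E] [CompleteSpace F]
    {T : E →ₗ.[𝕜] F} (hT : T.IsClosed) (f : ℕ → T.domain)
    (hf : CauchySeq fun n => (f n : E)) (hTf : CauchySeq fun n => T (f n)) :
    ∃ l : T.domain, Tendsto (fun n => (f n : E)) atTop (𝓝 l) ∧
      Tendsto (fun n => T (f n)) atTop (𝓝 (T l)) := by
  obtain ⟨x, hx⟩ := cauchySeq_tendsto_of_complete hf
  obtain ⟨y, hy⟩ := cauchySeq_tendsto_of_complete hTf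
  have hxy : (x, y) ∈ T.graph :=
    hT.mem_of_tendsto (hx.prodMk_nhds hy) (.of_forall fun n => T.mem_graph (f n))
  obtain ⟨l, rfl, rfl⟩ := (T.mem_graph_iff).1 hxy
  exact ⟨l, hx, hy⟩

theorem IsClosed.mem_domain_of_le_of_tendsto {S T : E →ₗ.[𝕜] F} (hS : S.IsClosed) (h : S ≤ T)
    (f : ℕ → T.domain) (hfS : ∀ n, (f n : E) ∈ S.domain) {x : E} {y : F}
    (hf : Tendsto (fun n => (f n : E)) atTop (𝓝 x)) (hTf : Tendsto (fun n => T (f n)) atTop (𝓝 y)) :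
    x ∈ S.domain := by
  have hgraph : ∀ n, ((f n : E), T (f n)) ∈ S.graph := fun n =>
    (h.2 rfl : S ⟨f n, hfS n⟩ = T (f n)) ▸ S.mem_graph ⟨f n, hfS n⟩
  obtain ⟨v, rfl, -⟩ := (S.mem_graph_iff).1
    (hS.mem_of_tendsto (hf.prodMk_nhds hTf) (.of_forall hgraph))
  exact v.2

end LinearPMap

section GraphDistance

variable (T : H →ₗ.[ℂ] H)

theorem gdist_eq_dist_add_dist (u v : T.adjoint.domain) :
    gdist T u v = dist (u : H) v + dist (T.adjoint u) (T.adjoint v) := by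
  simp only [gdist, gnorm, dist_eq_norm, Submodule.coe_sub, LinearPMap.map_sub]

variable {T}

theorem tendsto_gdist_zero_iff {f : ℕ → T.adjoint.domain} {l : T.adjoint.domain} :
    Tendsto (fun n => gdist T (f n) l) atTop (𝓝 0) ↔
      Tendsto (fun n => (f n : H)) atTop (𝓝 l) ∧
        Tendsto (fun n => T.adjoint (f n)) atTop (𝓝 (T.adjoint l)) := by
  simp only [gdist_eq_dist_add_dist]
  rw [tendsto_iff_dist_tendsto_zero (f := fun n => (f n : H)),
    tendsto_iff_dist_tendsto_zero (f := fun n => T.adjoint (f n))]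
  refine ⟨fun h => ⟨?_, ?_⟩, fun ⟨h₁, h₂⟩ => by simpa using h₁.add h₂⟩ <;>
    refine squeeze_zero (fun n => dist_nonneg) (fun n => ?_) h
  · exact le_add_of_nonneg_right dist_nonneg
  · exact le_add_of_nonneg_left dist_nonneg

theorem cauchySeq_of_gdist {f : ℕ → T.adjoint.domain}
    (hf : ∀ ε > (0 : ℝ), ∃ N, ∀ m ≥ N, ∀ n ≥ N, gdist T (f m) (f n) < ε) :
    (CauchySeq fun n => (f n : H)) ∧ CauchySeq fun n => T.adjoint (f n) := by
  simp only [Metric.cauchySeq_iff', gdist_eq_dist_add_dist] at hf ⊢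
  constructor <;> intro ε hε <;> obtain ⟨N, hN⟩ := hf ε hε <;>
    refine ⟨N, fun n hn => lt_of_le_of_lt ?_ (hN n hn N le_rfl)⟩
  · exact le_add_of_nonneg_right dist_nonneg
  · exact le_add_of_nonneg_left dist_nonneg

end GraphDistance

theorem IsDualPairT12.dense_domain_right_s13 {E : Type*} [NormedAddCommGroup E]
    [InnerProductSpace ℂ E] {T0 T0t : E →ₗ.[ℂ] E} {lam : ℝ} (hP : IsDualPairT12 T0 T0t lam) :
    Dense (T0t.domain : Set E) :=
  hP.dom_eq ▸ hP.dense'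

namespace IsDualPairT12

variable {T0 T0t : H →ₗ.[ℂ] H} {lam : ℝ}

theorem le_adjoint (hP : IsDualPairT12 T0 T0t lam) : T0 ≤ T0t.adjoint :=
  LinearPMap.IsFormalAdjoint.le_adjoint hP.dense_domain_right_s13 fun ψ φ => (hP.sym φ ψ).symm

theorem norm_adjoint_add_adjoint_le (hP : IsDualPairT12 T0 T0t lam) (x : H)
    (hx : x ∈ T0t.adjoint.domain) (hx' : x ∈ T0.adjoint.domain) :
    ‖T0t.adjoint ⟨x, hx⟩ + T0.adjoint ⟨x, hx'⟩‖ ≤ 2 * lam * ‖x‖ := by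
  refine hP.dense'.norm_le_of_forall_norm_inner_le (𝕜 := ℂ) (by have := hP.lam_pos; positivity)
    fun φ hφ => ?_
  set ψ : T0t.domain := ⟨φ, hP.dom_eq.le hφ⟩
  have hsum : ⟪T0t.adjoint ⟨x, hx⟩ + T0.adjoint ⟨x, hx'⟩, φ⟫_ℂ = ⟪x, T0 ⟨φ, hφ⟩ + T0t ψ⟫_ℂ := by
    rw [inner_add_left, inner_add_right, add_comm,
      LinearPMap.adjoint_isFormalAdjoint hP.dense' _ ⟨φ, hφ⟩,
      LinearPMap.adjoint_isFormalAdjoint hP.dense_domain_right_s13 _ ψ]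
  calc ‖⟪T0t.adjoint ⟨x, hx⟩ + T0.adjoint ⟨x, hx'⟩, φ⟫_ℂ‖
      ≤ ‖x‖ * ‖T0 ⟨φ, hφ⟩ + T0t ψ‖ := hsum ▸ norm_inner_le_norm _ _
    _ ≤ ‖x‖ * (2 * lam * ‖φ‖) := by gcongr; exact hP.bound φ hφ
    _ = 2 * lam * ‖x‖ * ‖φ‖ := by ring

end IsDualPairT12

/-- Theorem 2.3 (iv): the graph norms of `T₁` and `T̃₁` are equivalent on `W`
(with explicit constant `1 + 2λ` in one direction), `W` is complete for the
graph norm, and `W₀` is a graph-norm closed subspace of `W` containing `D`. -/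
theorem graph_norms_equivalent_and_complete
    (T0 T0t : H →ₗ.[ℂ] H) (lam : ℝ) (hP : IsDualPairT12 T0 T0t lam)
    (hW : T0t.adjoint.domain = T0.adjoint.domain) :
    (∀ u : T0t.adjoint.domain,
      ‖(u : H)‖ + ‖T0.adjoint ⟨(u : H), hW.le u.2⟩‖ ≤
        (1 + 2 * lam) * (‖(u : H)‖ + ‖T0t.adjoint u‖)) ∧
    (∃ C > (0 : ℝ), ∀ u : T0t.adjoint.domain,
      ‖(u : H)‖ + ‖T0t.adjoint u‖ ≤
        C * (‖(u : H)‖ + ‖T0.adjoint ⟨(u : H), hW.le u.2⟩‖)) ∧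
    (∀ f : ℕ → ↥T0t.adjoint.domain,
      (∀ ε > (0 : ℝ), ∃ N, ∀ m ≥ N, ∀ n ≥ N, gdist T0t (f m) (f n) < ε) →
      ∃ l, Tendsto (fun n => gdist T0t (f n) l) atTop (𝓝 0)) ∧
    GClosed T0t (W0set T0 T0t) ∧
    (∀ x ∈ T0.domain, x ∈ T0t.adjoint.domain) ∧
    (∀ x ∈ T0.domain, x ∈ T0.closure.domain) := by
  have hlam := hP.lam_pos.le
  have hsum : ∀ u : T0t.adjoint.domain,
      ‖T0t.adjoint u + T0.adjoint ⟨u, hW.le u.2⟩‖ ≤ 2 * lam * ‖(u : H)‖ := fun u =>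
    hP.norm_adjoint_add_adjoint_le u u.2 (hW.le u.2)
  have hT1 : T0t.adjoint.IsClosed := LinearPMap.adjoint_isClosed hP.dense_domain_right_s13
  have hclosable : T0.IsClosable :=
    LinearPMap.isClosable_iff_exists_closed_extension.2 ⟨_, hT1, hP.le_adjoint⟩
  refine ⟨fun u => norm_add_norm_le_of_norm_add_le (by positivity) (hsum u),
    ⟨1 + 2 * lam, by positivity, fun u =>
      norm_add_norm_le_of_norm_add_le (by positivity) (by rw [add_comm]; exact hsum u)⟩,
    fun f hf => ?_, fun f hf l hl => ?_, fun x hx => hP.le_adjoint.1 hx,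
    fun x hx => T0.le_closure.1 hx⟩
  · obtain ⟨hfH, hT1f⟩ := cauchySeq_of_gdist hf
    obtain ⟨l, hl, hT1l⟩ := hT1.exists_tendsto_of_cauchySeq f hfH hT1f
    exact ⟨l, tendsto_gdist_zero_iff.2 ⟨hl, hT1l⟩⟩
  · obtain ⟨hl, hT1l⟩ := tendsto_gdist_zero_iff.1 hl
    exact hclosable.closure_isClosed.mem_domain_of_le_of_tendsto
      (LinearPMap.closure_le_of_le_of_isClosed hT1 hP.le_adjoint) f hf hl hT1l
end
end

section
/- Let (T0, T̃0) be a joint pair of abstract Friedrichs operators on a complex Hilbert space H, with constant μ > 0 from condition (T3). If V is a subspace of the graph space W with W0 ⊆ V ⊆ W⁺, then ‖T1 u‖ ≥ μ‖u‖ for every u ∈ V; in particular, the closure of the range of T1 restricted to V equals the range of the closure of T1 restricted to V. Analogously, if Ṽ is a subspace of W with W0 ⊆ Ṽ ⊆ W⁻, then ‖T̃1 v‖ ≥ μ‖v‖ for every v ∈ Ṽ. -/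
open scoped InnerProductSpace
open Filter Topology LinearPMap

noncomputable section

variable {H : Type*} [NormedAddCommGroup H] [InnerProductSpace ℂ H] [CompleteSpace H]

/-! The coercivity (T3) of `T₀ + T̃₀` on `D` passes to `T₁ + T̃₁` on the whole graph space `W`:
for `u ∈ W` and `φ ∈ D` one has `⟨(T₁ + T̃₁)u, φ⟩ = ⟨u, (T₀ + T̃₀)φ⟩`, and approximating `u` by
`φ ∈ D` the error is controlled by the bound (T2). Adding `Re [u|u] ≥ 0` to
`Re ⟨(T₁ + T̃₁)u, u⟩ ≥ 2μ‖u‖²` gives `Re ⟨T₁u, u⟩ ≥ μ‖u‖²`, whence `‖T₁u‖ ≥ μ‖u‖`, and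
symmetrically for `T̃₁` on `W⁻`. An operator bounded below in this way has a closed range once
it is closed, which identifies the closure of `ran T₁|_V` with the range of the closure. -/

section InnerProduct

open RCLike

variable {𝕜 E : Type*} [RCLike 𝕜] [NormedAddCommGroup E] [InnerProductSpace 𝕜 E]

theorem mul_norm_le_norm_of_mul_sq_le_re_inner {c : ℝ} {a u : E}
    (h : c * ‖u‖ ^ 2 ≤ re ⟪a, u⟫_𝕜) : c * ‖u‖ ≤ ‖a‖ := by
  rcases (norm_nonneg u).eq_or_lt with hu | hu
  · rw [← hu, mul_zero]
    exact norm_nonneg a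
  · refine le_of_mul_le_mul_right ?_ hu
    calc c * ‖u‖ * ‖u‖ = c * ‖u‖ ^ 2 := by ring
      _ ≤ re ⟪a, u⟫_𝕜 := h
      _ ≤ ‖a‖ * ‖u‖ := re_inner_le_norm a u

theorem mul_sq_le_re_inner_of_dense {D : Set E} (hD : Dense D) {A : D → E} {C c : ℝ}
    (hbound : ∀ x : D, ‖A x‖ ≤ C * ‖(x : E)‖)
    (hcoer : ∀ x : D, c * ‖(x : E)‖ ^ 2 ≤ re ⟪(x : E), A x⟫_𝕜)
    {g u : E} (hg : ∀ x : D, ⟪g, (x : E)⟫_𝕜 = ⟪u, A x⟫_𝕜) : c * ‖u‖ ^ 2 ≤ re ⟪g, u⟫_𝕜 := by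
  let lower : E → ℝ := fun x => c * ‖x‖ ^ 2 - C * ‖u - x‖ * ‖x‖
  have hlower : ∀ x : D, lower x ≤ re ⟪g, (x : E)⟫_𝕜 := fun x => by
    have herr : -(‖u - x‖ * (C * ‖(x : E)‖)) ≤ re ⟪u - x, A x⟫_𝕜 := by
      calc -(‖u - x‖ * (C * ‖(x : E)‖)) ≤ -(‖u - x‖ * ‖A x‖) :=
            neg_le_neg (mul_le_mul_of_nonneg_left (hbound x) (norm_nonneg _))
        _ ≤ re ⟪u - x, A x⟫_𝕜 :=
            neg_le_of_abs_le ((abs_re_le_norm _).trans (norm_inner_le_norm _ _))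
    have hsplit : re ⟪g, (x : E)⟫_𝕜 = re ⟪(x : E), A x⟫_𝕜 + re ⟪u - x, A x⟫_𝕜 := by
      rw [hg, ← _root_.map_add, ← inner_add_left, add_sub_cancel]
    simp only [lower]
    linarith [hcoer x]
  have hclosed : IsClosed {x : E | lower x ≤ re ⟪g, x⟫_𝕜} :=
    isClosed_le (by fun_prop) (by fun_prop)
  have hu : lower u ≤ re ⟪g, u⟫_𝕜 :=
    closure_minimal (fun x hx => hlower ⟨x, hx⟩) hclosed (hD.closure_eq ▸ Set.mem_univ u)
  simpa [lower] using hu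

end InnerProduct

namespace LinearPMap

variable {𝕜 E F : Type*} [NontriviallyNormedField 𝕜] [NormedAddCommGroup E] [NormedSpace 𝕜 E]
  [NormedAddCommGroup F] [NormedSpace 𝕜 F] {T : E →ₗ.[𝕜] F} {μ : ℝ}

theorem cauchySeq_of_bound (hμ : 0 < μ) (hb : ∀ x : T.domain, μ * ‖(x : E)‖ ≤ ‖T x‖)
    {x : ℕ → T.domain} (hx : CauchySeq fun n => T (x n)) : CauchySeq fun n => (x n : E) := by
  rw [Metric.cauchySeq_iff'] at hx ⊢
  intro ε hε
  obtain ⟨N, hN⟩ := hx (μ * ε) (by positivity)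
  refine ⟨N, fun n hn => ?_⟩
  have hbn := hb (x n - x N)
  rw [T.map_sub] at hbn
  have hTn := hN n hn
  rw [dist_eq_norm] at hTn ⊢
  exact lt_of_mul_lt_mul_left (hbn.trans_lt hTn) hμ.le

theorem IsClosed.isClosed_range_of_bound [CompleteSpace E] (hT : T.IsClosed) (hμ : 0 < μ)
    (hb : ∀ x : T.domain, μ * ‖(x : E)‖ ≤ ‖T x‖) : _root_.IsClosed (Set.range T) := by
  refine isClosed_of_closure_subset fun y hy => ?_
  obtain ⟨f, hf, hfy⟩ := mem_closure_iff_seq_limit.mp hy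
  choose x hx using hf
  obtain ⟨a, ha⟩ := cauchySeq_tendsto_of_complete
    (cauchySeq_of_bound hμ hb (x := x) (by simpa only [hx] using hfy.cauchySeq))
  have hgraph : (a, y) ∈ T.graph := hT.mem_of_tendsto (ha.prodMk_nhds hfy)
    (Eventually.of_forall fun n => hx n ▸ T.mem_graph (x n))
  exact mem_range_iff.mpr ⟨a, hgraph⟩

theorem IsClosable.mem_closure_graph (hT : T.IsClosable) (x : T.closure.domain) :
    ((x : E), T.closure x) ∈ _root_.closure (T.graph : Set (E × F)) := by
  rw [← Submodule.topologicalClosure_coe, hT.graph_closure_eq_closure_graph]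
  exact T.closure.mem_graph x

theorem IsClosable.mul_norm_le_norm_closure (hT : T.IsClosable)
    (hb : ∀ x : T.domain, μ * ‖(x : E)‖ ≤ ‖T x‖) (x : T.closure.domain) :
    μ * ‖(x : E)‖ ≤ ‖T.closure x‖ := by
  have hclosed : _root_.IsClosed {p : E × F | μ * ‖p.1‖ ≤ ‖p.2‖} :=
    isClosed_le (continuous_const.mul continuous_fst.norm) continuous_snd.norm
  have hgraph : (T.graph : Set (E × F)) ⊆ {p | μ * ‖p.1‖ ≤ ‖p.2‖} := by
    rintro ⟨a, b⟩ hp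
    obtain ⟨z, rfl, rfl⟩ := T.mem_graph_iff.mp hp
    exact hb z
  exact closure_minimal hgraph hclosed (hT.mem_closure_graph x)

theorem IsClosable.range_closure_subset (hT : T.IsClosable) :
    Set.range T.closure ⊆ _root_.closure (Set.range T) := by
  rintro _ ⟨x, rfl⟩
  have hsnd : Prod.snd '' (T.graph : Set (E × F)) ⊆ Set.range T := by
    rintro _ ⟨p, hp, rfl⟩
    exact mem_range_iff.mpr ⟨p.1, hp⟩
  exact _root_.closure_mono hsnd
    (image_closure_subset_closure_image continuous_snd ⟨_, hT.mem_closure_graph x, rfl⟩)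

theorem IsClosable.closure_range_eq_range_closure [CompleteSpace E] (hT : T.IsClosable)
    (hμ : 0 < μ) (hb : ∀ x : T.domain, μ * ‖(x : E)‖ ≤ ‖T x‖) :
    _root_.closure (Set.range T) = Set.range T.closure := by
  refine (closure_minimal ?_ ?_).antisymm hT.range_closure_subset
  · rintro _ ⟨x, rfl⟩
    exact ⟨⟨x, T.le_closure.1 x.2⟩, (T.le_closure.2 rfl).symm⟩
  · exact hT.closure_isClosed.isClosed_range_of_bound hμ (hT.mul_norm_le_norm_closure hb)

end LinearPMap

theorem re_bform_self (T0 T0t : H →ₗ.[ℂ] H) (hW : T0t.adjoint.domain = T0.adjoint.domain)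
    (u : T0t.adjoint.domain) :
    (bform T0 T0t hW u u).re =
      (⟪T0t.adjoint u, (u : H)⟫_ℂ).re - (⟪T0.adjoint ⟨u, hW.le u.2⟩, (u : H)⟫_ℂ).re := by
  rw [bform, pInner, pInner, Complex.sub_re, ← RCLike.re_eq_complex_re, inner_re_symm]

namespace IsFriedrichsPair

variable {T0 T0t : H →ₗ.[ℂ] H} {lam mu : ℝ}

theorem mul_sq_le_re_inner_T1_add_T1t (hF : IsFriedrichsPair T0 T0t lam mu)
    (hW : T0t.adjoint.domain = T0.adjoint.domain) (u : T0t.adjoint.domain) :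
    2 * mu * ‖(u : H)‖ ^ 2 ≤
      (⟪T0t.adjoint u + T0.adjoint ⟨u, hW.le u.2⟩, (u : H)⟫_ℂ).re := by
  have hdt : Dense (T0t.domain : Set H) := hF.dom_eq ▸ hF.dense'
  refine mul_sq_le_re_inner_of_dense (𝕜 := ℂ) (D := T0.domain) (C := 2 * lam) hF.dense'
    (A := fun x => T0 x + T0t ⟨x, hF.dom_eq.le x.2⟩) (fun x => hF.bound x x.2)
    (fun x => hF.coercive x x.2) fun x => ?_
  rw [inner_add_left, inner_add_right, add_comm,
    adjoint_isFormalAdjoint hdt u ⟨x, hF.dom_eq.le x.2⟩,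
    adjoint_isFormalAdjoint hF.dense' ⟨u, hW.le u.2⟩ x]

theorem mul_norm_le_norm_T1_of_mem_Wplus (hF : IsFriedrichsPair T0 T0t lam mu)
    (hW : T0t.adjoint.domain = T0.adjoint.domain) {u : T0t.adjoint.domain}
    (hu : u ∈ Wplus T0 T0t hW) : mu * ‖(u : H)‖ ≤ ‖T0t.adjoint u‖ := by
  have hcoer := hF.mul_sq_le_re_inner_T1_add_T1t hW u
  have hbform : 0 ≤ (bform T0 T0t hW u u).re := hu
  rw [inner_add_left, Complex.add_re] at hcoer
  rw [re_bform_self] at hbform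
  refine mul_norm_le_norm_of_mul_sq_le_re_inner (𝕜 := ℂ) ?_
  rw [RCLike.re_eq_complex_re]
  linarith

theorem mul_norm_le_norm_T1t_of_mem_Wminus (hF : IsFriedrichsPair T0 T0t lam mu)
    (hW : T0t.adjoint.domain = T0.adjoint.domain) {u : T0t.adjoint.domain}
    (hu : u ∈ Wminus T0 T0t hW) : mu * ‖(u : H)‖ ≤ ‖T0.adjoint ⟨u, hW.le u.2⟩‖ := by
  have hcoer := hF.mul_sq_le_re_inner_T1_add_T1t hW u
  have hbform : (bform T0 T0t hW u u).re ≤ 0 := hu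
  rw [inner_add_left, Complex.add_re] at hcoer
  rw [re_bform_self] at hbform
  refine mul_norm_le_norm_of_mul_sq_le_re_inner (𝕜 := ℂ) ?_
  rw [RCLike.re_eq_complex_re]
  linarith

end IsFriedrichsPair

/-- Theorem 2.3 (x): if `W₀ ⊆ V ⊆ W⁺`, then `‖T₁u‖ ≥ μ‖u‖` on `V` and
`closure (ran T₁|_V) = ran (closure of T₁|_V)`; analogously, if `W₀ ⊆ Ṽ ⊆ W⁻`,
then `‖T̃₁v‖ ≥ μ‖v‖` on `Ṽ`. -/
theorem lower_bound_on_nonneg_subspace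
    (T0 T0t : H →ₗ.[ℂ] H) (lam mu : ℝ) (hF : IsFriedrichsPair T0 T0t lam mu)
    (hW : T0t.adjoint.domain = T0.adjoint.domain) :
    (∀ (V : Submodule ℂ H) (_h0 : T0.closure.domain ≤ V)
        (hVW : V ≤ T0t.adjoint.domain),
      (∀ (u : H) (hu : u ∈ V),
        0 ≤ (bform T0 T0t hW ⟨u, hVW hu⟩ ⟨u, hVW hu⟩).re) →
      (∀ (u : H) (hu : u ∈ V), mu * ‖u‖ ≤ ‖T0t.adjoint ⟨u, hVW hu⟩‖) ∧
      closure {y : H | ∃ u : (T0t.adjoint.domRestrict V).domain,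
          (T0t.adjoint.domRestrict V) u = y} =
        {y : H | ∃ u : (T0t.adjoint.domRestrict V).closure.domain,
          (T0t.adjoint.domRestrict V).closure u = y}) ∧
    (∀ (Vt : Submodule ℂ H) (_h0 : T0.closure.domain ≤ Vt)
        (hVW : Vt ≤ T0t.adjoint.domain),
      (∀ (v : H) (hv : v ∈ Vt),
        (bform T0 T0t hW ⟨v, hVW hv⟩ ⟨v, hVW hv⟩).re ≤ 0) →
      ∀ (v : H) (hv : v ∈ Vt),
        mu * ‖v‖ ≤ ‖T0.adjoint ⟨v, hW.le (hVW hv)⟩‖) := by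
  have hdt : Dense (T0t.domain : Set H) := hF.dom_eq ▸ hF.dense'
  refine ⟨fun V _ hVW hV => ?_, fun Vt _ hVW hVt v hv =>
    hF.mul_norm_le_norm_T1t_of_mem_Wminus hW (u := ⟨v, hVW hv⟩) (hVt v hv)⟩
  have hbound : ∀ (u : H) (hu : u ∈ V), mu * ‖u‖ ≤ ‖T0t.adjoint ⟨u, hVW hu⟩‖ :=
    fun u hu => hF.mul_norm_le_norm_T1_of_mem_Wplus hW (u := ⟨u, hVW hu⟩) (hV u hu)
  have hclosable : (T0t.adjoint.domRestrict V).IsClosable :=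
    (adjoint_isClosed hdt).isClosable.leIsClosable domRestrict_le
  exact ⟨hbound, hclosable.closure_range_eq_range_closure hF.mu_pos fun x =>
    hbound x x.2.1⟩
end
end
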